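/- The minimum Hamming weight of a decreasing monomial code C(I) equals 2^{m - r+}, where r+ = r+(C(I)) is the largest r such that x_0 x_1 ··· x_{r-1} ∈ I (equivalently, the minimal r with C(I) ⊆ R(r,m)). -/

import Mathlib

/-- The partial order `⪯` on square-free monomials. -/
def preceq {m : ℕ} (S T : Finset (Fin m)) : Prop :=
  ∃ T' ⊆ T, T'.card = S.card ∧
    List.Forall₂ (· ≤ ·) (S.sort (· ≤ ·)) (T'.sort (· ≤ ·))

/-- A decreasing set of monomials. -/
def Decreasing {m : ℕ} (I : Finset (Finset (Fin m))) : Prop :=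
  ∀ f ∈ I, ∀ g, preceq g f → g ∈ I

/-- Evaluation vector of a square-free monomial. -/
def evalMon {m : ℕ} (S : Finset (Fin m)) : (Fin m → ZMod 2) → ZMod 2 :=
  fun u => ∏ i ∈ S, u i

/-- The monomial code `C(I)`. -/
def monomialCode {m : ℕ} (I : Finset (Finset (Fin m))) :
    Submodule (ZMod 2) ((Fin m → ZMod 2) → ZMod 2) :=
  Submodule.span (ZMod 2) (evalMon '' (I : Set (Finset (Fin m))))

/-- The monomial `x_0 x_1 ⋯ x_{r-1}`. -/
def initSeg (m r : ℕ) : Finset (Fin m) :=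
  Finset.univ.filter (fun i : Fin m => i.val < r)

/-- `r₊(C(I))`: the largest `r ≤ m` with `x_0⋯x_{r-1} ∈ I`. -/
noncomputable def rPlus {m : ℕ} (I : Finset (Finset (Fin m))) : ℕ :=
  sSup { r | r ≤ m ∧ initSeg m r ∈ I }

/-- Hamming weight of a codeword. -/
def wt {m : ℕ} (c : (Fin m → ZMod 2) → ZMod 2) : ℕ :=
  (Finset.univ.filter (fun u : Fin m → ZMod 2 => c u ≠ 0)).card

/-! For every monomial `x_S` of a decreasing set `I` we have `x_0 ⋯ x_{|S|-1} ⪯ x_S`, so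
`|S| ≤ r₊` and `C(I) ⊆ R(r₊, m)`, whose nonzero words have weight at least `2^{m-r₊}`; the
latter follows by induction on `m` from Plotkin's decomposition `c = (c₀ | c₁)` along `x_0`, in
which `c₀ + c₁ ∈ R(r - 1, m - 1)`. The bound is attained by `x_0 ⋯ x_{r₊-1} ∈ I`, whose
evaluation vector has exactly `2^{m-r₊}` nonzero entries. -/

open Finset

section Weight

variable {m : ℕ}

lemma wt_zero : wt (0 : (Fin m → ZMod 2) → ZMod 2) = 0 := by
  simp [wt]

lemma wt_pos {c : (Fin m → ZMod 2) → ZMod 2} (hc : c ≠ 0) : 0 < wt c := by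
  obtain ⟨u, hu⟩ := Function.ne_iff.1 hc
  exact card_pos.2 ⟨u, mem_filter.2 ⟨mem_univ u, hu⟩⟩

lemma wt_add_le (c d : (Fin m → ZMod 2) → ZMod 2) : wt (c + d) ≤ wt c + wt d := by
  refine (card_le_card fun u hu => ?_).trans (card_union_le _ _)
  simp only [mem_union, mem_filter, mem_univ, true_and, Pi.add_apply] at hu ⊢
  by_contra! h
  simp [h.1, h.2] at hu

lemma evalMon_ne_zero_iff (S : Finset (Fin m)) (u : Fin m → ZMod 2) :
    evalMon S u ≠ 0 ↔ ∀ i ∈ S, u i = 1 := by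
  simp only [evalMon, prod_ne_zero_iff]
  exact forall₂_congr fun i _ => by generalize u i = x; revert x; decide

lemma wt_evalMon (S : Finset (Fin m)) : wt (evalMon S) = 2 ^ (m - #S) := by
  have hsupp : ({u | evalMon S u ≠ 0} : Finset (Fin m → ZMod 2)) =
      Fintype.piFinset fun i => if i ∈ S then {1} else univ := by
    ext u
    simp only [mem_filter, mem_univ, true_and, evalMon_ne_zero_iff, Fintype.mem_piFinset]
    refine forall_congr' fun i => ?_
    split_ifs <;> simp [*]
  rw [wt, hsupp, Fintype.card_piFinset]
  simp [apply_ite card, prod_ite, filter_not, card_sdiff]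

lemma evalMon_ne_zero (S : Finset (Fin m)) : evalMon S ≠ 0 := fun h => by
  simpa [evalMon] using congrFun h 1

end Weight

section Restriction

variable {m : ℕ}

def restrictFirst (m : ℕ) (b : ZMod 2) :
    ((Fin (m + 1) → ZMod 2) → ZMod 2) →ₗ[ZMod 2] ((Fin m → ZMod 2) → ZMod 2) :=
  LinearMap.funLeft (ZMod 2) (ZMod 2) (Fin.cons (α := fun _ => ZMod 2) b)

lemma wt_eq_wt_restrictFirst_add_wt_restrictFirst (c : (Fin (m + 1) → ZMod 2) → ZMod 2) :
    wt c = wt (restrictFirst m 0 c) + wt (restrictFirst m 1 c) := by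
  simp only [wt, card_filter]
  rw [← (Fin.consEquiv fun _ => ZMod 2).sum_comp, Fintype.sum_prod_type]
  exact Fin.sum_univ_two _

def shiftDown (S : Finset (Fin (m + 1))) : Finset (Fin m) :=
  {i | i.succ ∈ S}

lemma card_shiftDown (S : Finset (Fin (m + 1))) :
    #(shiftDown S) + (if 0 ∈ S then 1 else 0) = #S := by
  have := Fin.card_filter_univ_succ (· ∈ S)
  simp only [filter_mem_eq_inter, univ_inter] at this
  rw [this, shiftDown]
  split_ifs <;> rfl

lemma evalMon_cons (S : Finset (Fin (m + 1))) (b : ZMod 2) (v : Fin m → ZMod 2) :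
    evalMon S (Fin.cons b v) = (if 0 ∈ S then b else 1) * evalMon (shiftDown S) v := by
  rw [evalMon, evalMon, ← Fintype.prod_ite_mem, Fin.prod_univ_succ, shiftDown, prod_filter]
  simp

lemma restrictFirst_evalMon (b : ZMod 2) (S : Finset (Fin (m + 1))) :
    restrictFirst m b (evalMon S) = (if 0 ∈ S then b else 1) • evalMon (shiftDown S) :=
  funext (evalMon_cons S b)

lemma restrictFirst_add_restrictFirst_evalMon (S : Finset (Fin (m + 1))) :
    restrictFirst m 0 (evalMon S) + restrictFirst m 1 (evalMon S) =
      if 0 ∈ S then evalMon (shiftDown S) else 0 := by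
  simp only [restrictFirst_evalMon]
  split_ifs
  · simp
  · simpa using CharTwo.add_self_eq_zero (evalMon (shiftDown S))

end Restriction

section ReedMuller

variable {m : ℕ}

def reedMuller (m r : ℕ) : Submodule (ZMod 2) ((Fin m → ZMod 2) → ZMod 2) :=
  Submodule.span (ZMod 2) (evalMon '' {S | #S ≤ r})

lemma restrictFirst_mem_reedMuller {r : ℕ} (b : ZMod 2) {c : (Fin (m + 1) → ZMod 2) → ZMod 2}
    (hc : c ∈ reedMuller (m + 1) r) : restrictFirst m b c ∈ reedMuller m r := by
  refine (Submodule.map_span_le _ _ _).2 ?_ (Submodule.mem_map_of_mem hc)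
  rintro _ ⟨S, hS : #S ≤ r, rfl⟩
  have := card_shiftDown S
  rw [restrictFirst_evalMon]
  exact Submodule.smul_mem _ _ (Submodule.subset_span ⟨_, (by omega : #(shiftDown S) ≤ r), rfl⟩)

lemma restrictFirst_add_restrictFirst_mem_reedMuller {r : ℕ}
    {c : (Fin (m + 1) → ZMod 2) → ZMod 2} (hc : c ∈ reedMuller (m + 1) (r + 1)) :
    restrictFirst m 0 c + restrictFirst m 1 c ∈ reedMuller m r := by
  refine (Submodule.map_span_le (restrictFirst m 0 + restrictFirst m 1) _ _).2 ?_
    (Submodule.mem_map_of_mem hc)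
  rintro _ ⟨S, hS : #S ≤ r + 1, rfl⟩
  have := card_shiftDown S
  rw [LinearMap.add_apply, restrictFirst_add_restrictFirst_evalMon]
  split_ifs at this ⊢
  · exact Submodule.subset_span ⟨_, (by omega : #(shiftDown S) ≤ r), rfl⟩
  · exact Submodule.zero_mem _

lemma restrictFirst_add_restrictFirst_eq_zero_of_mem_reedMuller_zero
    {c : (Fin (m + 1) → ZMod 2) → ZMod 2} (hc : c ∈ reedMuller (m + 1) 0) :
    restrictFirst m 0 c + restrictFirst m 1 c = 0 := by
  refine (Submodule.mem_bot (ZMod 2)).1 <|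
    (Submodule.map_span_le (restrictFirst m 0 + restrictFirst m 1) _ ⊥).2 ?_
      (Submodule.mem_map_of_mem hc)
  rintro _ ⟨S, hS, rfl⟩
  rw [card_eq_zero.1 (Nat.le_zero.1 hS)]
  simp [restrictFirst_add_restrictFirst_evalMon]

theorem two_pow_le_wt_of_mem_reedMuller {r : ℕ} {c : (Fin m → ZMod 2) → ZMod 2}
    (hc : c ∈ reedMuller m r) (hc0 : c ≠ 0) : 2 ^ (m - r) ≤ wt c := by
  induction m generalizing r with
  | zero => rw [Nat.zero_sub, pow_zero]; exact wt_pos hc0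
  | succ m ih =>
    set c₀ := restrictFirst m 0 c
    set c₁ := restrictFirst m 1 c
    have hsplit : wt c = wt c₀ + wt c₁ := wt_eq_wt_restrictFirst_add_wt_restrictFirst c
    by_cases hΔ : c₀ + c₁ = 0
    · have h01 : c₀ = c₁ := CharTwo.add_eq_zero.1 hΔ
      have hc₀ : c₀ ≠ 0 := by
        rintro h
        simpa [hsplit, ← h01, h, wt_zero] using wt_pos hc0
      calc 2 ^ (m + 1 - r) ≤ 2 * 2 ^ (m - r) := by
            rw [← pow_succ']; exact Nat.pow_le_pow_right two_pos (by omega)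
        _ ≤ wt c₀ + wt c₁ := by
            have : 2 ^ (m - r) ≤ wt c₀ := ih (restrictFirst_mem_reedMuller 0 hc) hc₀
            rw [← h01]; omega
        _ = wt c := hsplit.symm
    · obtain _ | r := r
      · exact absurd (restrictFirst_add_restrictFirst_eq_zero_of_mem_reedMuller_zero hc) hΔ
      calc 2 ^ (m + 1 - (r + 1)) = 2 ^ (m - r) := by rw [Nat.add_sub_add_right]
        _ ≤ wt (c₀ + c₁) := ih (restrictFirst_add_restrictFirst_mem_reedMuller hc) hΔ
        _ ≤ wt c₀ + wt c₁ := wt_add_le c₀ c₁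
        _ = wt c := hsplit.symm

end ReedMuller

section DecreasingSet

variable {m : ℕ}

lemma card_initSeg {r : ℕ} (h : r ≤ m) : #(initSeg m r) = r := by
  simpa [initSeg] using (Fin.card_filter_val_lt (n := m) (m := r)).trans (min_eq_right h)

lemma Fin.val_le_of_strictMono {k : ℕ} {f : Fin k → Fin m} (hf : StrictMono f) (i : Fin k) :
    (i : ℕ) ≤ f i :=
  calc (i : ℕ) = #(Iio i) := (Fin.card_Iio i).symm
    _ ≤ #(Iio (f i)) := card_le_card_of_injOn f (fun j hj => by simpa using hf (by simpa using hj))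
        hf.injective.injOn
    _ = f i := Fin.card_Iio (f i)

lemma preceq_empty (T : Finset (Fin m)) : preceq ∅ T :=
  ⟨∅, empty_subset T, rfl, by simp⟩

lemma initSeg_card_preceq (S : Finset (Fin m)) : preceq (initSeg m #S) S := by
  have hS : #S ≤ m := (card_le_univ S).trans_eq (Fintype.card_fin m)
  have hk := card_initSeg hS
  refine ⟨S, subset_rfl, hk.symm, List.forall₂_iff_get.2 ⟨by simp [hk], fun i hi hi' => ?_⟩⟩
  have hinit : (initSeg m #S).orderEmbOfFin hk = Fin.castLE hS :=
    (orderEmbOfFin_unique hk (fun i => by simp [initSeg]) (Fin.strictMono_castLE hS)).symm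
  have hi₀ : i < #S := by simpa using hi'
  calc _ = (initSeg m #S).orderEmbOfFin hk ⟨i, hi₀⟩ := rfl
    _ = Fin.castLE hS ⟨i, hi₀⟩ := congrFun hinit _
    _ ≤ S.orderEmbOfFin rfl ⟨i, hi₀⟩ :=
      Fin.le_iff_val_le_val.2 (Fin.val_le_of_strictMono (S.orderEmbOfFin rfl).strictMono ⟨i, hi₀⟩)

lemma empty_mem_of_decreasing {I : Finset (Finset (Fin m))} (hI : Decreasing I)
    (hne : I.Nonempty) : ∅ ∈ I :=
  hI _ hne.choose_spec ∅ (preceq_empty _)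

lemma rPlus_le_and_initSeg_mem {I : Finset (Finset (Fin m))} (hI : Decreasing I)
    (hne : I.Nonempty) : rPlus I ≤ m ∧ initSeg m (rPlus I) ∈ I :=
  Nat.sSup_mem (s := {r | r ≤ m ∧ initSeg m r ∈ I})
    ⟨0, Nat.zero_le m, by simpa [initSeg] using empty_mem_of_decreasing hI hne⟩ ⟨m, fun _ h => h.1⟩

lemma card_le_rPlus {I : Finset (Finset (Fin m))} (hI : Decreasing I) {S : Finset (Fin m)}
    (hS : S ∈ I) : #S ≤ rPlus I :=
  le_csSup ⟨m, fun _ h => h.1⟩ ⟨(card_le_univ S).trans_eq (Fintype.card_fin m),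
    hI S hS _ (initSeg_card_preceq S)⟩

lemma monomialCode_le_reedMuller {I : Finset (Finset (Fin m))} (hI : Decreasing I) :
    monomialCode I ≤ reedMuller m (rPlus I) :=
  Submodule.span_mono (Set.image_mono fun _ hS => card_le_rPlus hI hS)

end DecreasingSet

/-- the minimum Hamming weight of a decreasing monomial code
`C(I)` equals `2^{m - r₊(C(I))}`. -/
theorem minWeight_decreasing_monomialCode {m : ℕ} (I : Finset (Finset (Fin m)))
    (hI : Decreasing I) (hne : I.Nonempty) :
    (∃ c ∈ monomialCode I, c ≠ 0 ∧ wt c = 2 ^ (m - rPlus I)) ∧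
    (∀ c ∈ monomialCode I, c ≠ 0 → 2 ^ (m - rPlus I) ≤ wt c) := by
  obtain ⟨hr, hmem⟩ := rPlus_le_and_initSeg_mem hI hne
  refine ⟨⟨evalMon (initSeg m (rPlus I)), Submodule.subset_span ⟨_, hmem, rfl⟩,
    evalMon_ne_zero _, by rw [wt_evalMon, card_initSeg hr]⟩, fun c hc hc0 => ?_⟩
  exact two_pow_le_wt_of_mem_reedMuller (monomialCode_le_reedMuller hI hc) hc0
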